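/- Let f, h : ℝⁿ → ℝ be smooth with compact support. Then the function s ↦ A(f + s h) is differentiable at s = 0 and d/ds A(f + s h)|_{s=0} = −∫_{ℝⁿ} (Δf + P(f)) h dx; that is, the right-hand side of the PDE, Δf + P(f), is the negative L² gradient of the action functional A. -/

import Mathlib

open MeasureTheory Filter Topology
open scoped ENNReal

noncomputable section

/-- Euclidean space `ℝⁿ`. -/
abbrev Spc (n : ℕ) := EuclideanSpace ℝ (Fin n)

/-- The Laplacian in the spatial variables. -/
noncomputable def lap {n : ℕ} (f : Spc n → ℝ) (x : Spc n) : ℝ :=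
  ∑ i : Fin n, fderiv ℝ (fun y => fderiv ℝ f y (EuclideanSpace.single i 1)) x
    (EuclideanSpace.single i 1)

/-- The polynomial nonlinearity `P(f)(x) = -f(x)^N + ∑_{i<N} aᵢ(x) f(x)^i`. -/
noncomputable def Pfun {n N : ℕ} (a : Fin N → Spc n → ℝ) (f : Spc n → ℝ) (x : Spc n) : ℝ :=
  -(f x) ^ N + ∑ i : Fin N, a i x * f x ^ (i : ℕ)

/-- The time derivative `∂u/∂t`. -/
noncomputable def timeDeriv {n : ℕ} (u : ℝ × Spc n → ℝ) (t : ℝ) (x : Spc n) : ℝ :=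
  deriv (fun s => u (s, x)) t

/-- `u` is a global solution of `∂u/∂t = Δu + P(u)`. -/
def IsSol {n N : ℕ} (a : Fin N → Spc n → ℝ) (u : ℝ × Spc n → ℝ) : Prop :=
  ∀ t x, timeDeriv u t x = lap (fun y => u (t, y)) x + Pfun a (fun y => u (t, y)) x

/-- `w` is an equilibrium: `Δw + P(w) = 0`. -/
def IsEquilibrium {n N : ℕ} (a : Fin N → Spc n → ℝ) (w : Spc n → ℝ) : Prop :=
  ∀ x, lap w x + Pfun a w x = 0

/-- The energy density `|∂u/∂t|² + |Δu + P(u)|²`. -/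
noncomputable def energyDensity {n N : ℕ} (a : Fin N → Spc n → ℝ) (u : ℝ × Spc n → ℝ)
    (t : ℝ) (x : Spc n) : ℝ :=
  (timeDeriv u t x) ^ 2 + (lap (fun y => u (t, y)) x + Pfun a (fun y => u (t, y)) x) ^ 2

/-- The energy `E(u) = (1/2) ∫_ℝ ∫_{ℝⁿ} (|∂u/∂t|² + |Δu + P(u)|²) dx dt`, valued in `ℝ≥0∞`. -/
noncomputable def energy {n N : ℕ} (a : Fin N → Spc n → ℝ) (u : ℝ × Spc n → ℝ) : ℝ≥0∞ :=
  (1 / 2) * ∫⁻ t : ℝ, ∫⁻ x : Spc n, ENNReal.ofReal (energyDensity a u t x)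

/-- The action density `(1/2)|∇f|² + f^{N+1}/(N+1) - ∑_{i<N} aᵢ f^{i+1}/(i+1)`. -/
noncomputable def actionDensity {n N : ℕ} (a : Fin N → Spc n → ℝ) (f : Spc n → ℝ)
    (x : Spc n) : ℝ :=
  (1 / 2) * ‖gradient f x‖ ^ 2 + f x ^ (N + 1) / (N + 1)
    - ∑ i : Fin N, a i x * f x ^ ((i : ℕ) + 1) / ((i : ℕ) + 1)

/-- The action functional `A(f)`. -/
noncomputable def action {n N : ℕ} (a : Fin N → Spc n → ℝ) (f : Spc n → ℝ) : ℝ :=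
  ∫ x : Spc n, actionDensity a f x

/-- `f` has finite action. -/
def FiniteAction {n N : ℕ} (a : Fin N → Spc n → ℝ) (f : Spc n → ℝ) : Prop :=
  Integrable (actionDensity a f)

/-- The coefficients `aᵢ` are smooth, in `L¹ ∩ L∞`, with all derivatives of all orders
bounded. -/
def GoodCoeffs {n N : ℕ} (a : Fin N → Spc n → ℝ) : Prop :=
  ∀ i, ContDiff ℝ (⊤ : ℕ∞) (a i) ∧ Integrable (a i) ∧
    ∀ k : ℕ, ∃ C : ℝ, ∀ x, ‖iteratedFDeriv ℝ k (a i) x‖ ≤ C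

/-- `u`, `∂u/∂t` and the spatial derivatives of `u` up to order two are bounded by a
constant multiple of `(1+|x|)^{-(n+1)}`, uniformly for `t` in compact intervals. -/
def AdmissibleDecay {n : ℕ} (u : ℝ × Spc n → ℝ) : Prop :=
  ∀ T > (0 : ℝ), ∃ C : ℝ, ∀ t : ℝ, ∀ x : Spc n, |t| ≤ T →
    |u (t, x)| ≤ C * (1 + ‖x‖) ^ (-(n + 1 : ℝ)) ∧
    |timeDeriv u t x| ≤ C * (1 + ‖x‖) ^ (-(n + 1 : ℝ)) ∧
    ‖fderiv ℝ (fun y => u (t, y)) x‖ ≤ C * (1 + ‖x‖) ^ (-(n + 1 : ℝ)) ∧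
    ‖iteratedFDeriv ℝ 2 (fun y => u (t, y)) x‖ ≤ C * (1 + ‖x‖) ^ (-(n + 1 : ℝ))

/-! Pointwise, `s ↦ actionDensity a (f + s h) x` is a polynomial in `s` with derivative
`⟪∇f + s ∇h, ∇h⟫ - P(f + s h) h`. This derivative is jointly continuous in `(s, x)` and vanishes off
the compact set `tsupport h`, hence is dominated near `s = 0` by a multiple of its indicator, and
the derivative may be taken under the integral sign. At `s = 0`, integrating by parts in each
coordinate turns `∫ ⟪∇f, ∇h⟫` into `-∫ Δf h`. -/

open scoped RealInnerProductSpace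

section DifferentiationUnderIntegral

variable {α E : Type*} [TopologicalSpace α] [T2Space α] [MeasurableSpace α] [OpensMeasurableSpace α]
  {μ : Measure α} [IsFiniteMeasureOnCompacts μ] [NormedAddCommGroup E] [NormedSpace ℝ E]
  [SecondCountableTopologyEither α E]

theorem hasDerivAt_integral_of_continuous_deriv_of_vanishing_off_compact
    {F F' : ℝ → α → E} {K : Set α} (hK : IsCompact K) {t₀ : ℝ}
    (hF_meas : ∀ t, AEStronglyMeasurable (F t) μ) (hF_int : Integrable (F t₀) μ)
    (hF'_cont : Continuous (Function.uncurry F')) (hF'_zero : ∀ t, ∀ x ∉ K, F' t x = 0)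
    (hF' : ∀ t x, HasDerivAt (F · x) (F' t x) t) :
    HasDerivAt (fun t => ∫ x, F t x ∂μ) (∫ x, F' t₀ x ∂μ) t₀ := by
  obtain ⟨C, hC⟩ : ∃ C, ∀ p ∈ Metric.closedBall t₀ 1 ×ˢ K, ‖Function.uncurry F' p‖ ≤ C :=
    ((isCompact_closedBall t₀ 1).prod hK).exists_bound_of_continuousOn hF'_cont.continuousOn
  have h_bound : ∀ᵐ x ∂μ, ∀ t ∈ Metric.ball t₀ 1, ‖F' t x‖ ≤ K.indicator (fun _ => C) x := by
    refine Eventually.of_forall fun x t ht => ?_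
    by_cases hx : x ∈ K
    · rw [Set.indicator_of_mem hx]
      exact hC (t, x) ⟨Metric.ball_subset_closedBall ht, hx⟩
    · simp [hx, hF'_zero t x hx]
  have bound_int : Integrable (K.indicator fun _ => C) μ :=
    (integrable_indicator_iff hK.isClosed.measurableSet).2
      (integrableOn_const hK.measure_lt_top.ne)
  exact (hasDerivAt_integral_of_dominated_loc_of_deriv_le (Metric.ball_mem_nhds t₀ one_pos)
    (Eventually.of_forall hF_meas) hF_int
    (hF'_cont.comp (Continuous.prodMk_right t₀)).aestronglyMeasurable h_bound bound_int
    (Eventually.of_forall fun x t _ => hF' t x)).2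

end DifferentiationUnderIntegral

section Gradient

variable {F : Type*} [NormedAddCommGroup F] [InnerProductSpace ℝ F] [CompleteSpace F]

theorem gradient_eq_zero_of_notMem_tsupport {g : F → ℝ} {x : F} (hx : x ∉ tsupport g) :
    gradient g x = 0 := by
  simp [gradient, fderiv_of_notMem_tsupport ℝ hx]

theorem ContDiff.continuous_gradient {g : F → ℝ} {k : WithTop ℕ∞} (hg : ContDiff ℝ k g)
    (hk : k ≠ 0) : Continuous (gradient g) :=
  (LinearIsometryEquiv.continuous _).comp (hg.continuous_fderiv hk)

theorem gradient_add_mul {g₁ g₂ : F → ℝ} {x : F} (h₁ : DifferentiableAt ℝ g₁ x)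
    (h₂ : DifferentiableAt ℝ g₂ x) (s : ℝ) :
    gradient (fun y => g₁ y + s * g₂ y) x = gradient g₁ x + s • gradient g₂ x := by
  simp only [gradient, fderiv_fun_add h₁ (h₂.const_mul s), fderiv_const_mul h₂, map_add,
    map_smul]

end Gradient

theorem ContDiff.fderiv_apply_const {𝕜 E F : Type*} [NontriviallyNormedField 𝕜]
    [NormedAddCommGroup E] [NormedSpace 𝕜 E] [NormedAddCommGroup F] [NormedSpace 𝕜 F]
    {g : E → F} {m k : WithTop ℕ∞} (hg : ContDiff 𝕜 k g) (hmk : m + 1 ≤ k) (v : E) :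
    ContDiff 𝕜 m (fun x => fderiv 𝕜 g x v) :=
  (hg.fderiv_right hmk).clm_apply contDiff_const

section ActionFunctional

variable {n N : ℕ}

theorem inner_gradient_eq_sum_fderiv_mul (g₁ g₂ : Spc n → ℝ) (x : Spc n) :
    ⟪gradient g₁ x, gradient g₂ x⟫ = ∑ i : Fin n,
      fderiv ℝ g₁ x (EuclideanSpace.single i 1) * fderiv ℝ g₂ x (EuclideanSpace.single i 1) := by
  simp only [← inner_gradient_left, PiLp.inner_apply]
  simp [mul_comm]

theorem continuous_lap {f : Spc n → ℝ} (hf : ContDiff ℝ 2 f) : Continuous (lap f) := by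
  refine continuous_finsetSum _ fun i _ => ?_
  exact ((hf.fderiv_apply_const le_rfl _).continuous_fderiv one_ne_zero).clm_apply
    continuous_const

theorem integral_inner_gradient_eq_neg_integral_lap_mul {f h : Spc n → ℝ} (hf : ContDiff ℝ 2 f)
    (hh : ContDiff ℝ 1 h) (hhc : HasCompactSupport h) :
    ∫ x, ⟪gradient f x, gradient h x⟫ = -∫ x, lap f x * h x := by
  set e : Fin n → Spc n := fun i => EuclideanSpace.single i 1
  have hdf : ∀ i, ContDiff ℝ 1 (fun x => fderiv ℝ f x (e i)) := fun i =>
    hf.fderiv_apply_const le_rfl (e i)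
  have hdh : ∀ i, Continuous (fun x => fderiv ℝ h x (e i)) := fun i =>
    (hh.continuous_fderiv one_ne_zero).clm_apply continuous_const
  have hd2f : ∀ i, Continuous (fun x => fderiv ℝ (fun y => fderiv ℝ f y (e i)) x (e i)) :=
    fun i => ((hdf i).continuous_fderiv one_ne_zero).clm_apply continuous_const
  have int_dfdh : ∀ i, Integrable fun x => fderiv ℝ f x (e i) * fderiv ℝ h x (e i) := fun i =>
    ((hdf i).continuous.mul (hdh i)).integrable_of_hasCompactSupport
      (hhc.fderiv_apply ℝ (e i)).mul_left
  have int_d2fh : ∀ i,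
      Integrable fun x => fderiv ℝ (fun y => fderiv ℝ f y (e i)) x (e i) * h x := fun i =>
    ((hd2f i).mul hh.continuous).integrable_of_hasCompactSupport hhc.mul_left
  calc ∫ x, ⟪gradient f x, gradient h x⟫
      = ∑ i, ∫ x, fderiv ℝ f x (e i) * fderiv ℝ h x (e i) := by
        simp_rw [inner_gradient_eq_sum_fderiv_mul]
        exact integral_finsetSum _ fun i _ => int_dfdh i
    _ = ∑ i, -∫ x, fderiv ℝ (fun y => fderiv ℝ f y (e i)) x (e i) * h x :=
        Finset.sum_congr rfl fun i _ => integral_mul_fderiv_eq_neg_fderiv_mul_of_integrable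
          (int_d2fh i) (int_dfdh i)
          (((hdf i).continuous.mul hh.continuous).integrable_of_hasCompactSupport hhc.mul_left)
          (fun x _ => (hdf i).differentiable one_ne_zero x)
          (fun x _ => hh.differentiable one_ne_zero x)
    _ = -∫ x, lap f x * h x := by
        simp only [lap, Finset.sum_mul]
        rw [integral_finsetSum _ fun i _ => int_d2fh i, Finset.sum_neg_distrib]

theorem continuous_Pfun {a : Fin N → Spc n → ℝ} (ha : ∀ i, Continuous (a i)) {g : Spc n → ℝ}
    (hg : Continuous g) : Continuous (Pfun a g) := by
  unfold Pfun; fun_prop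

theorem continuous_actionDensity {a : Fin N → Spc n → ℝ} (ha : ∀ i, Continuous (a i))
    {g : Spc n → ℝ} (hg : ContDiff ℝ 1 g) : Continuous (actionDensity a g) := by
  have := hg.continuous_gradient one_ne_zero
  have := hg.continuous
  unfold actionDensity; fun_prop

theorem hasCompactSupport_actionDensity (a : Fin N → Spc n → ℝ) {g : Spc n → ℝ}
    (hg : HasCompactSupport g) : HasCompactSupport (actionDensity a g) :=
  HasCompactSupport.intro hg fun x hx => by
    simp [actionDensity, image_eq_zero_of_notMem_tsupport hx,
      gradient_eq_zero_of_notMem_tsupport hx]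

theorem hasDerivAt_actionDensity_add_mul (a : Fin N → Spc n → ℝ) {g h : Spc n → ℝ} {x : Spc n}
    (hg : DifferentiableAt ℝ g x) (hh : DifferentiableAt ℝ h x) (t : ℝ) :
    HasDerivAt (fun s => actionDensity a (fun y => g y + s * h y) x)
      (⟪gradient g x + t • gradient h x, gradient h x⟫
        - Pfun a (fun y => g y + t * h y) x * h x) t := by
  have hu : HasDerivAt (fun s => g x + s * h x) (h x) t := by
    simpa using ((hasDerivAt_id t).mul_const (h x)).const_add (g x)
  have hgrad : HasDerivAt (fun s : ℝ => gradient g x + s • gradient h x) (gradient h x) t := by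
    simpa using ((hasDerivAt_id t).smul_const (gradient h x)).const_add (gradient g x)
  have key := ((hgrad.norm_sq.const_mul (1 / 2)).fun_add
      ((hu.fun_pow (N + 1)).div_const ((N : ℝ) + 1))).fun_sub
    (HasDerivAt.fun_sum (u := Finset.univ) fun (i : Fin N) _ =>
      ((hu.fun_pow ((i : ℕ) + 1)).const_mul (a i x)).div_const (((i : ℕ) : ℝ) + 1))
  simp only [actionDensity, gradient_add_mul hg hh]
  refine key.congr_deriv ?_
  have hcancel : ∀ k : ℕ, ∀ c : ℝ, ((k : ℝ) + 1) * c / ((k : ℝ) + 1) = c := fun k c =>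
    mul_div_cancel_left₀ c k.cast_add_one_ne_zero
  simp only [Nat.add_sub_cancel, Nat.cast_add, Nat.cast_one, mul_assoc, mul_div_assoc, hcancel]
  simp only [Pfun, add_mul, Finset.sum_mul, mul_assoc]
  ring

theorem hasDerivAt_action_add_mul {a : Fin N → Spc n → ℝ} (ha : ∀ i, Continuous (a i))
    {f h : Spc n → ℝ} (hf : ContDiff ℝ 1 f) (hh : ContDiff ℝ 1 h) (hfc : HasCompactSupport f)
    (hhc : HasCompactSupport h) :
    HasDerivAt (fun s : ℝ => action a (fun x => f x + s * h x))
      (∫ x, ⟪gradient f x, gradient h x⟫ - Pfun a f x * h x) 0 := by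
  have hgf := hf.continuous_gradient one_ne_zero
  have hgh := hh.continuous_gradient one_ne_zero
  have hcf := hf.continuous
  have hch := hh.continuous
  have hvar := hasDerivAt_integral_of_continuous_deriv_of_vanishing_off_compact (μ := volume)
    (F := fun s x => actionDensity a (fun y => f y + s * h y) x) (t₀ := 0) hhc
    (fun s => (continuous_actionDensity ha (hf.add (contDiff_const.mul hh))).aestronglyMeasurable)
    (by simpa using (continuous_actionDensity ha hf).integrable_of_hasCompactSupport
          (hasCompactSupport_actionDensity a hfc))
    (by simp only [Pfun]; fun_prop)
    (fun t x hx => by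
      simp [gradient_eq_zero_of_notMem_tsupport hx, image_eq_zero_of_notMem_tsupport hx])
    (fun t x => hasDerivAt_actionDensity_add_mul a (hf.differentiable one_ne_zero x)
      (hh.differentiable one_ne_zero x) t)
  exact hvar.congr_deriv (by simp only [zero_smul, add_zero, zero_mul])

theorem integral_inner_gradient_sub_Pfun_mul {a : Fin N → Spc n → ℝ} (ha : ∀ i, Continuous (a i))
    {f h : Spc n → ℝ} (hf : ContDiff ℝ 2 f) (hh : ContDiff ℝ 1 h) (hhc : HasCompactSupport h) :
    ∫ x, ⟪gradient f x, gradient h x⟫ - Pfun a f x * h x = -∫ x, (lap f x + Pfun a f x) * h x := by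
  have int_inner : Integrable fun x => ⟪gradient f x, gradient h x⟫ :=
    ((hf.continuous_gradient two_ne_zero).inner (hh.continuous_gradient one_ne_zero))
      |>.integrable_of_hasCompactSupport <| HasCompactSupport.intro hhc fun x hx => by
        simp [gradient_eq_zero_of_notMem_tsupport hx]
  have int_Ph : Integrable fun x => Pfun a f x * h x :=
    ((continuous_Pfun ha hf.continuous).mul hh.continuous).integrable_of_hasCompactSupport
      hhc.mul_left
  have int_laph : Integrable fun x => lap f x * h x :=
    ((continuous_lap hf).mul hh.continuous).integrable_of_hasCompactSupport hhc.mul_left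
  simp only [add_mul]
  rw [integral_sub int_inner int_Ph, integral_add int_laph int_Ph,
    integral_inner_gradient_eq_neg_integral_lap_mul hf hh hhc]
  ring

end ActionFunctional

theorem pde_is_negative_gradient_of_action_general
    {n N : ℕ}
    (a : Fin N → Spc n → ℝ) (ha : GoodCoeffs a)
    (f h : Spc n → ℝ)
    (hf : ContDiff ℝ (⊤ : ℕ∞) f) (hh : ContDiff ℝ (⊤ : ℕ∞) h)
    (hfc : HasCompactSupport f) (hhc : HasCompactSupport h) :
    HasDerivAt (fun s : ℝ => action a (fun x => f x + s * h x))
      (-∫ x : Spc n, (lap f x + Pfun a f x) * h x) 0 := by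
  have ha_cont : ∀ i, Continuous (a i) := fun i => (ha i).1.continuous
  have hf2 : ContDiff ℝ 2 f := hf.of_le (WithTop.coe_le_coe.2 le_top)
  have hh1 : ContDiff ℝ 1 h := hh.of_le (WithTop.coe_le_coe.2 le_top)
  rw [← integral_inner_gradient_sub_Pfun_mul ha_cont hf2 hh1 hhc]
  exact hasDerivAt_action_add_mul ha_cont (hf2.of_le one_le_two) hh1 hfc hhc

/-- For smooth compactly supported `f, h : ℝⁿ → ℝ`, the function
`s ↦ A(f + s h)` is differentiable at `s = 0` with derivative
`-∫ (Δf + P(f)) h dx`: the right-hand side of the PDE is the negative `L²` gradient of the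
action functional. -/
theorem pde_is_negative_gradient_of_action
    {n N : ℕ} (hn : 1 ≤ n) (hN : 2 ≤ N)
    (a : Fin N → Spc n → ℝ) (ha : GoodCoeffs a)
    (f h : Spc n → ℝ)
    (hf : ContDiff ℝ (⊤ : ℕ∞) f) (hh : ContDiff ℝ (⊤ : ℕ∞) h)
    (hfc : HasCompactSupport f) (hhc : HasCompactSupport h) :
    HasDerivAt (fun s : ℝ => action a (fun x => f x + s * h x))
      (-∫ x : Spc n, (lap f x + Pfun a f x) * h x) 0 :=
  pde_is_negative_gradient_of_action_general a ha f h hf hh hfc hhc
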